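/- arXiv:1702.04071 — 2 statements merged into one kernel-verified Lean document; each statement's English description precedes it below -/
import Mathlib

section
/- The center of B(Z_2) is one-dimensional over F_2, spanned by the identity element 1 = i_0 + i_1 + i_2 + i_3. -/
open FreeAlgebra

/-- Generators of the path algebra `B(Z_2)`: four vertex idempotents and seven arrows. -/
inductive Gen2 : Type
  | e : Fin 4 → Gen2
  | r : Fin 7 → Gen2

/-- Sources of the arrows ρ₁,…,ρ₇. -/
def src2 : Fin 7 → Fin 4 := ![0, 1, 0, 1, 2, 3, 2]

/-- Targets of the arrows ρ₁,…,ρ₇. -/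
def tgt2 : Fin 7 → Fin 4 := ![1, 0, 1, 2, 3, 2, 3]

/-- Relations presenting `B(Z_2)` as a quotient of the free algebra: the path-algebra
relations for the quiver together with ρ₁ρ₄ = ρ₄ρ₇ = ρ₂ρ₁ = ρ₃ρ₂ = ρ₆ρ₅ = ρ₇ρ₆ = 0. -/
inductive Rel2 : FreeAlgebra (ZMod 2) Gen2 → FreeAlgebra (ZMod 2) Gen2 → Prop
  | idem (k : Fin 4) :
      Rel2 (ι (ZMod 2) (Gen2.e k) * ι (ZMod 2) (Gen2.e k)) (ι (ZMod 2) (Gen2.e k))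
  | orth (k l : Fin 4) (h : k ≠ l) : Rel2 (ι (ZMod 2) (Gen2.e k) * ι (ZMod 2) (Gen2.e l)) 0
  | sum : Rel2 (∑ k : Fin 4, ι (ZMod 2) (Gen2.e k)) 1
  | source (m : Fin 7) :
      Rel2 (ι (ZMod 2) (Gen2.e (src2 m)) * ι (ZMod 2) (Gen2.r m)) (ι (ZMod 2) (Gen2.r m))
  | target (m : Fin 7) :
      Rel2 (ι (ZMod 2) (Gen2.r m) * ι (ZMod 2) (Gen2.e (tgt2 m))) (ι (ZMod 2) (Gen2.r m))
  | rel14 : Rel2 (ι (ZMod 2) (Gen2.r 0) * ι (ZMod 2) (Gen2.r 3)) 0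
  | rel47 : Rel2 (ι (ZMod 2) (Gen2.r 3) * ι (ZMod 2) (Gen2.r 6)) 0
  | rel21 : Rel2 (ι (ZMod 2) (Gen2.r 1) * ι (ZMod 2) (Gen2.r 0)) 0
  | rel32 : Rel2 (ι (ZMod 2) (Gen2.r 2) * ι (ZMod 2) (Gen2.r 1)) 0
  | rel65 : Rel2 (ι (ZMod 2) (Gen2.r 5) * ι (ZMod 2) (Gen2.r 4)) 0
  | rel76 : Rel2 (ι (ZMod 2) (Gen2.r 6) * ι (ZMod 2) (Gen2.r 5)) 0

/-- The genus-2 bordered algebra `B(Z_2)`. -/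
abbrev B2 : Type := RingQuot Rel2

/-- The idempotents i₀, i₁, i₂, i₃ in `B(Z_2)`. -/
noncomputable def idem2 (k : Fin 4) : B2 :=
  RingQuot.mkAlgHom (ZMod 2) Rel2 (ι (ZMod 2) (Gen2.e k))

/-- The arrows ρ₁,…,ρ₇ in `B(Z_2)` (indexed by `Fin 7`). -/
noncomputable def arr2 (m : Fin 7) : B2 :=
  RingQuot.mkAlgHom (ZMod 2) Rel2 (ι (ZMod 2) (Gen2.r m))

/-- The arrow ρ_k in `B(Z_2)`, using 1-based indexing; `0` for out-of-range indices. -/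
noncomputable def ρ2 (k : ℕ) : B2 :=
  if h : 1 ≤ k ∧ k ≤ 7 then arr2 ⟨k - 1, by omega⟩ else 0

/-- The chord ρ_{[i,j]} = ρ_i ρ_{i+1} ⋯ ρ_j in `B(Z_2)` (1-based indices). -/
noncomputable def chord2 (i j : ℕ) : B2 :=
  ((List.range' i (j + 1 - i)).map ρ2).prod

/-!
The nonzero paths of the quiver, the four idempotents and the chords `ρ_i ρ_{i+1} ⋯ ρ_j`, span
`B(Z_2)`, because the relations kill exactly the composable pairs of non-consecutive arrows. Their
multiplication table is associative, so left multiplication on formal combinations of paths is a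
32-dimensional matrix representation of `B(Z_2)`, in which coefficients can be read off. For a
central `z`, comparing coefficients in `z g = g z` for generators `g` shows: the idempotent at the
target of a chord with distinct endpoints kills it; the loops `ρ₁ρ₂`, `ρ₂ρ₃`, `ρ₅ρ₆`, `ρ₆ρ₇` are
killed by the arrows `ρ₃`, `ρ₁`, `ρ₇`, `ρ₅` extending them; and each arrow forces equal
coefficients on the idempotents at its two ends. The quiver being connected, `z` is a multiple of
`i₀ + i₁ + i₂ + i₃ = 1`, and the representation shows `1 ≠ 0`.
-/

section LeftRegular

variable {P : Type*} [DecidableEq P] (R : Type*) [CommSemiring R] (μ : P → P → Option P)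

/-- The left regular representation of a multiplication table `μ` on a basis `P`, in which every
product of basis elements is a basis element or zero (`none`). -/
def leftMulMatrix (p : P) : Matrix P P R :=
  Matrix.of fun r q => if μ p q = some r then 1 else 0

variable {R μ}

theorem elim_leftMulMatrix_apply (o : Option P) (r q : P) :
    o.elim 0 (leftMulMatrix R μ) r q = if o.bind (μ · q) = some r then 1 else 0 := by
  cases o <;> simp [leftMulMatrix]

variable [Fintype P]

theorem leftMulMatrix_mul (hμ : ∀ p q r, (μ p q).bind (μ · r) = (μ q r).bind (μ p)) (p q : P) :
    leftMulMatrix R μ p * leftMulMatrix R μ q = (μ p q).elim 0 (leftMulMatrix R μ) := by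
  ext r s
  rw [elim_leftMulMatrix_apply, hμ, Matrix.mul_apply]
  rcases hqs : μ q s with _ | t <;> simp [leftMulMatrix, hqs]

/-- Column `q` of `Z * L g = L g * Z`, for `Z = ∑ c p • L p` the matrix of `z = ∑ c p • p` and
`q` a right unit of `r` alone, compares the coefficients of `r` in `z g` and in `g z`. -/
theorem sum_filter_eq_of_commute_leftMulMatrix
    (hμ : ∀ p q r, (μ p q).bind (μ · r) = (μ q r).bind (μ p)) {c : P → R} {g : P}
    (h : Commute (∑ p, c p • leftMulMatrix R μ p) (leftMulMatrix R μ g))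
    {r q : P} (hq : ∀ x, μ x q = some r ↔ x = r) :
    ∑ p with μ p g = some r, c p = ∑ p with μ g p = some r, c p := by
  have hrq : ∀ o : Option P, o.bind (μ · q) = some r ↔ o = some r := by
    rintro (_ | x) <;> simp [hq]
  have := congrFun (congrFun h.eq r) q
  simp only [Finset.sum_mul, Finset.mul_sum, Matrix.smul_mul, Matrix.mul_smul,
    leftMulMatrix_mul hμ, Matrix.sum_apply, Matrix.smul_apply, elim_leftMulMatrix_apply,
    hrq, smul_eq_mul, mul_ite, mul_one, mul_zero] at this
  simpa [Finset.sum_ite] using this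

end LeftRegular

theorem Submodule.eq_top_of_one_mem_of_mul_mem {R A : Type*} [CommSemiring R] [Semiring A]
    [Algebra R A] {s : Set A} (hs : Algebra.adjoin R s = ⊤) {S : Submodule R A} (h1 : 1 ∈ S)
    (hmul : ∀ x ∈ S, ∀ y ∈ s, x * y ∈ S) : S = ⊤ := by
  have key : ∀ y ∈ Algebra.adjoin R s, ∀ x ∈ S, x * y ∈ S := by
    intro y hy
    induction hy using Algebra.adjoin_induction with
    | mem y hy => exact fun x hx => hmul x hx y hy
    | algebraMap r =>
      intro x hx
      rw [← Algebra.commutes, ← Algebra.smul_def]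
      exact S.smul_mem r hx
    | add y z _ _ hy hz =>
      intro x hx
      rw [mul_add]
      exact add_mem (hy x hx) (hz x hx)
    | mul y z _ _ hy hz =>
      intro x hx
      rw [← mul_assoc]
      exact hz _ (hy x hx)
  exact eq_top_iff.2 fun y _ => one_mul y ▸ key y (hs ▸ Algebra.mem_top) 1 h1

theorem mkAlgHom_ι_mul_ι_eq_zero {a b : Gen2} (h : Rel2 (ι (ZMod 2) a * ι (ZMod 2) b) 0) :
    RingQuot.mkAlgHom (ZMod 2) Rel2 (ι (ZMod 2) a) *
      RingQuot.mkAlgHom (ZMod 2) Rel2 (ι (ZMod 2) b) = 0 := by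
  rw [← map_mul, RingQuot.mkAlgHom_rel _ h, map_zero]

theorem one_eq_sum_idem2 : (1 : B2) = ∑ k : Fin 4, idem2 k := by
  have h := RingQuot.mkAlgHom_rel (ZMod 2) Rel2.sum
  rw [map_sum, map_one] at h
  exact h.symm

theorem idem2_mul_idem2 (k l : Fin 4) : idem2 k * idem2 l = if k = l then idem2 k else 0 := by
  split_ifs with h
  · subst h
    rw [idem2, ← map_mul]
    exact RingQuot.mkAlgHom_rel _ (Rel2.idem k)
  · exact mkAlgHom_ι_mul_ι_eq_zero (Rel2.orth k l h)

theorem idem2_mul_arr2 (k : Fin 4) (m : Fin 7) :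
    idem2 k * arr2 m = if k = src2 m then arr2 m else 0 := by
  have hsrc : idem2 (src2 m) * arr2 m = arr2 m := by
    rw [idem2, arr2, ← map_mul]
    exact RingQuot.mkAlgHom_rel _ (Rel2.source m)
  split_ifs with h
  · rw [h, hsrc]
  · rw [← hsrc, ← mul_assoc, idem2_mul_idem2, if_neg h, zero_mul]

theorem arr2_mul_idem2 (m : Fin 7) (k : Fin 4) :
    arr2 m * idem2 k = if tgt2 m = k then arr2 m else 0 := by
  have htgt : arr2 m * idem2 (tgt2 m) = arr2 m := by
    rw [idem2, arr2, ← map_mul]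
    exact RingQuot.mkAlgHom_rel _ (Rel2.target m)
  split_ifs with h
  · rw [← h, htgt]
  · rw [← htgt, mul_assoc, idem2_mul_idem2, if_neg h, mul_zero]

set_option synthInstance.maxSize 256 in
theorem arr2_mul_arr2 (m m' : Fin 7) (h : (m : ℕ) + 1 ≠ m') : arr2 m * arr2 m' = 0 := by
  by_cases hm : tgt2 m = src2 m'
  · -- composable but not consecutive: one of the six defining relations
    have key : ∀ m m' : Fin 7, (m : ℕ) + 1 ≠ m' → tgt2 m = src2 m' →
        (m = 0 ∧ m' = 3) ∨ (m = 3 ∧ m' = 6) ∨ (m = 1 ∧ m' = 0) ∨ (m = 2 ∧ m' = 1) ∨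
        (m = 5 ∧ m' = 4) ∨ (m = 6 ∧ m' = 5) := by
      decide
    rcases key m m' h hm with
      ⟨rfl, rfl⟩ | ⟨rfl, rfl⟩ | ⟨rfl, rfl⟩ | ⟨rfl, rfl⟩ | ⟨rfl, rfl⟩ | ⟨rfl, rfl⟩
    exacts [mkAlgHom_ι_mul_ι_eq_zero .rel14, mkAlgHom_ι_mul_ι_eq_zero .rel47,
      mkAlgHom_ι_mul_ι_eq_zero .rel21, mkAlgHom_ι_mul_ι_eq_zero .rel32,
      mkAlgHom_ι_mul_ι_eq_zero .rel65, mkAlgHom_ι_mul_ι_eq_zero .rel76]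
  · have h₁ : arr2 m * idem2 (tgt2 m) = arr2 m := by rw [arr2_mul_idem2, if_pos rfl]
    have h₂ : idem2 (src2 m') * arr2 m' = arr2 m' := by rw [idem2_mul_arr2, if_pos rfl]
    rw [← h₁, ← h₂, mul_assoc, ← mul_assoc (idem2 _), idem2_mul_idem2, if_neg hm, zero_mul,
      mul_zero]

theorem ρ2_succ (m : Fin 7) : ρ2 (m + 1) = arr2 m := by
  simp [ρ2]

theorem chord2_self (a : ℕ) : chord2 a a = ρ2 a := by
  simp [chord2]

theorem chord2_succ {a b : ℕ} (h : a ≤ b + 1) : chord2 a (b + 1) = chord2 a b * ρ2 (b + 1) := by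
  rw [chord2, chord2, show b + 1 + 1 - a = b + 1 - a + 1 by omega, List.range'_concat,
    List.map_append, List.prod_append]
  simp [show a + (b + 1 - a) = b + 1 by omega]

/-- The nonzero paths: the vertices, and the chords `(i, j)` (0-based, so standing for
`ρ_{i+1} ⋯ ρ_{j+1}`). -/
abbrev B2Path : Type := Fin 4 ⊕ {x : Fin 7 × Fin 7 // x.1 ≤ x.2}

def B2Path.chord (i j : Fin 7) (h : i ≤ j := by decide) : B2Path := .inr ⟨(i, j), h⟩

def B2Path.src : B2Path → Fin 4
  | .inl k => k
  | .inr x => src2 x.1.1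

def B2Path.tgt : B2Path → Fin 4
  | .inl k => k
  | .inr x => tgt2 x.1.2

def pathMul : B2Path → B2Path → Option B2Path
  | .inl k, .inl l => if k = l then some (.inl k) else none
  | .inl k, .inr y => if k = src2 y.1.1 then some (.inr y) else none
  | .inr x, .inl k => if tgt2 x.1.2 = k then some (.inr x) else none
  | .inr x, .inr y =>
      if h : (x.1.2 : ℕ) + 1 = y.1.1 then
        some (.inr ⟨(x.1.1, y.1.2), x.2.trans ((Fin.le_def.2 (by omega)).trans y.2)⟩)
      else none

theorem pathMul_assoc : ∀ p q r : B2Path,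
    (pathMul p q).bind (pathMul · r) = (pathMul q r).bind (pathMul p) := by
  decide +kernel

def genPath : Gen2 → B2Path
  | .e k => .inl k
  | .r m => .chord m m le_rfl

theorem pathMul_inl_tgt_eq_some_iff : ∀ x r : B2Path, pathMul x (.inl r.tgt) = some r ↔ x = r := by
  decide

theorem src_eq_of_inl_pathMul_eq_some :
    ∀ (k : Fin 4) (p r : B2Path), pathMul (.inl k) p = some r → r.src = k := by
  decide

theorem pathMul_arrow_eq_arrow_iff : ∀ (m : Fin 7) (p : B2Path),
    pathMul p (genPath (.r m)) = some (genPath (.r m)) ↔ p = .inl (src2 m) := by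
  decide

theorem arrow_pathMul_eq_arrow_iff : ∀ (m : Fin 7) (p : B2Path),
    pathMul (genPath (.r m)) p = some (genPath (.r m)) ↔ p = .inl (tgt2 m) := by
  decide

noncomputable def pathElem : B2Path → B2
  | .inl k => idem2 k
  | .inr x => chord2 ((x.1.1 : ℕ) + 1) ((x.1.2 : ℕ) + 1)

theorem pathElem_chord_self (m : Fin 7) : pathElem (.chord m m le_rfl) = arr2 m := by
  rw [B2Path.chord, pathElem, chord2_self, ρ2_succ]

theorem pathElem_genPath (g : Gen2) :
    pathElem (genPath g) = RingQuot.mkAlgHom (ZMod 2) Rel2 (ι (ZMod 2) g) := by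
  cases g with
  | e k => rfl
  | r m => exact pathElem_chord_self m

theorem pathElem_inr_eq_mul_arr2 (x : {x : Fin 7 × Fin 7 // x.1 ≤ x.2}) :
    pathElem (.inr x) = chord2 ((x.1.1 : ℕ) + 1) x.1.2 * arr2 x.1.2 := by
  rw [pathElem, chord2_succ (by have := Fin.le_def.1 x.2; omega), ρ2_succ]

theorem pathElem_mul_genPath (p : B2Path) (g : Gen2) :
    pathElem p * pathElem (genPath g) = (pathMul p (genPath g)).elim 0 pathElem := by
  rcases p with k | x <;> rcases g with l | m <;> simp only [genPath, pathElem_chord_self]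
  · rw [pathElem, pathElem, idem2_mul_idem2]
    simp only [pathMul]
    split_ifs <;> rfl
  · rw [pathElem, idem2_mul_arr2]
    simp only [pathMul, B2Path.chord]
    split_ifs
    · exact (pathElem_chord_self m).symm
    · rfl
  · rw [pathElem_inr_eq_mul_arr2, pathElem, mul_assoc, arr2_mul_idem2]
    simp only [pathMul]
    split_ifs
    · exact (pathElem_inr_eq_mul_arr2 x).symm
    · rw [mul_zero]; rfl
  · simp only [pathMul, B2Path.chord]
    split_ifs with h
    · show pathElem (.inr x) * arr2 m = chord2 ((x.1.1 : ℕ) + 1) ((m : ℕ) + 1)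
      rw [chord2_succ (by have := Fin.le_def.1 x.2; omega), ρ2_succ, ← h]
      rfl
    · rw [pathElem_inr_eq_mul_arr2, mul_assoc, arr2_mul_arr2 _ _ h, mul_zero]
      rfl

theorem adjoin_range_mkAlgHom_ι :
    Algebra.adjoin (ZMod 2) (Set.range (RingQuot.mkAlgHom (ZMod 2) Rel2 ∘ ι (ZMod 2))) = ⊤ := by
  rw [Set.range_comp, ← AlgHom.map_adjoin, FreeAlgebra.adjoin_range_ι, Algebra.map_top,
    AlgHom.range_eq_top]
  exact RingQuot.mkAlgHom_surjective _ _

theorem span_pathElem_eq_top : Submodule.span (ZMod 2) (Set.range pathElem) = ⊤ := by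
  refine Submodule.eq_top_of_one_mem_of_mul_mem adjoin_range_mkAlgHom_ι ?_ ?_
  · rw [one_eq_sum_idem2]
    exact Submodule.sum_mem _ fun k _ => Submodule.subset_span ⟨.inl k, rfl⟩
  · rintro x hx _ ⟨g, rfl⟩
    rw [Function.comp_apply, ← pathElem_genPath]
    induction hx using Submodule.span_induction with
    | mem _ hp =>
      obtain ⟨p, rfl⟩ := hp
      rw [pathElem_mul_genPath]
      cases pathMul p (genPath g) with
      | none => exact zero_mem _
      | some q => exact Submodule.subset_span ⟨q, rfl⟩
    | zero => rw [zero_mul]; exact zero_mem _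
    | add _ _ _ _ hx hy => rw [add_mul]; exact add_mem hx hy
    | smul r _ _ hx => rw [smul_mul_assoc]; exact Submodule.smul_mem _ r hx

abbrev pathMatrix : B2Path → Matrix B2Path B2Path (ZMod 2) := leftMulMatrix (ZMod 2) pathMul

theorem lift_pathMatrix_ι_mul_ι (a b : Gen2) :
    FreeAlgebra.lift (ZMod 2) (pathMatrix ∘ genPath) (ι (ZMod 2) a * ι (ZMod 2) b) =
      (pathMul (genPath a) (genPath b)).elim 0 pathMatrix := by
  rw [map_mul, lift_ι_apply, lift_ι_apply]
  exact leftMulMatrix_mul pathMul_assoc _ _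

theorem sum_pathMatrix_inl : ∑ k : Fin 4, pathMatrix (.inl k) = 1 := by
  ext r q
  simp only [Matrix.sum_apply, leftMulMatrix, Matrix.of_apply, Matrix.one_apply]
  revert r q
  decide +kernel

noncomputable def pathRep : B2 →ₐ[ZMod 2] Matrix B2Path B2Path (ZMod 2) :=
  RingQuot.liftAlgHom (ZMod 2) ⟨FreeAlgebra.lift (ZMod 2) (pathMatrix ∘ genPath), by
    intro x y h
    induction h with
    | orth k l h => rw [lift_pathMatrix_ι_mul_ι, map_zero]; simp [genPath, pathMul, h]
    | sum => simpa [genPath] using sum_pathMatrix_inl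
    | _ => rw [lift_pathMatrix_ι_mul_ι]; simp [genPath, pathMul, B2Path.chord]⟩

theorem pathRep_pathElem_genPath (g : Gen2) :
    pathRep (pathElem (genPath g)) = pathMatrix (genPath g) := by
  rw [pathElem_genPath, pathRep, RingQuot.liftAlgHom_mkAlgHom_apply]
  exact lift_ι_apply _ _

theorem pathRep_pathElem_of_pathMul_eq_some {p q : B2Path} {g : Gen2}
    (h : pathMul p (genPath g) = some q) (hp : pathRep (pathElem p) = pathMatrix p) :
    pathRep (pathElem q) = pathMatrix q := by
  have := congrArg pathRep (pathElem_mul_genPath p g)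
  rwa [h, Option.elim_some, map_mul, hp, pathRep_pathElem_genPath,
    leftMulMatrix_mul pathMul_assoc, h, Option.elim_some, eq_comm] at this

theorem pathRep_pathElem (p : B2Path) : pathRep (pathElem p) = pathMatrix p := by
  rcases p with k | ⟨⟨i, j⟩, hij⟩
  · exact pathRep_pathElem_genPath (.e k)
  induction j using Fin.induction with
  | zero =>
    obtain rfl : i = 0 := Fin.le_zero_iff.1 (show i ≤ 0 from hij)
    exact pathRep_pathElem_genPath (.r 0)
  | succ j ih =>
    change i ≤ j.succ at hij
    rcases eq_or_lt_of_le hij with rfl | hlt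
    · exact pathRep_pathElem_genPath (.r _)
    refine pathRep_pathElem_of_pathMul_eq_some (p := .inr ⟨(i, j.castSucc), ?_⟩)
      (g := .r j.succ) ?_ (ih _)
    · exact Fin.le_castSucc_iff.2 hlt
    · simp [pathMul, genPath, B2Path.chord]

def IsCentralCoeffs (c : B2Path → ZMod 2) : Prop :=
  ∀ g : Gen2, Commute (∑ p, c p • pathMatrix p) (pathMatrix (genPath g))

namespace IsCentralCoeffs

variable {c : B2Path → ZMod 2}

theorem sum_eq (hc : IsCentralCoeffs c) (g : Gen2) {r : B2Path} {A B : Finset B2Path}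
    (hA : ∀ p, pathMul p (genPath g) = some r ↔ p ∈ A)
    (hB : ∀ p, pathMul (genPath g) p = some r ↔ p ∈ B) :
    ∑ p ∈ A, c p = ∑ p ∈ B, c p := by
  have := sum_filter_eq_of_commute_leftMulMatrix pathMul_assoc (hc g)
    (pathMul_inl_tgt_eq_some_iff · r)
  simpa only [hA, hB, Finset.filter_mem_eq_inter, Finset.univ_inter] using this

theorem src_eq_tgt (hc : IsCentralCoeffs c) (m : Fin 7) :
    c (.inl (src2 m)) = c (.inl (tgt2 m)) := by
  simpa using hc.sum_eq (.r m) (A := {.inl (src2 m)}) (B := {.inl (tgt2 m)})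
    (by simpa using pathMul_arrow_eq_arrow_iff m) (by simpa using arrow_pathMul_eq_arrow_iff m)

theorem inl_eq (hc : IsCentralCoeffs c) (k : Fin 4) : c (.inl k) = c (.inl 0) := by
  have h01 : c (.inl 0) = c (.inl 1) := hc.src_eq_tgt 0
  have h12 : c (.inl 1) = c (.inl 2) := hc.src_eq_tgt 3
  have h23 : c (.inl 2) = c (.inl 3) := hc.src_eq_tgt 4
  fin_cases k
  exacts [rfl, h01.symm, (h01.trans h12).symm, (h01.trans (h12.trans h23)).symm]

theorem eq_zero_of_src_ne_tgt (hc : IsCentralCoeffs c) {p : B2Path} (hp : p.src ≠ p.tgt) :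
    c p = 0 := by
  simpa using hc.sum_eq (.e p.tgt) (A := {p}) (B := ∅)
    (fun q => (pathMul_inl_tgt_eq_some_iff q p).trans Finset.mem_singleton.symm)
    (fun q => iff_of_false (fun h => hp (src_eq_of_inl_pathMul_eq_some _ _ _ h))
      (Finset.notMem_empty q))

theorem inr_eq_zero (hc : IsCentralCoeffs c) (x : {x : Fin 7 × Fin 7 // x.1 ≤ x.2}) :
    c (.inr x) = 0 := by
  by_cases hx : B2Path.src (.inr x) = B2Path.tgt (.inr x)
  swap
  · exact hc.eq_zero_of_src_ne_tgt hx
  have hloop : ∀ x, B2Path.src (.inr x) = B2Path.tgt (.inr x) →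
      (.inr x : B2Path) = B2Path.chord 0 1 ∨ (.inr x : B2Path) = B2Path.chord 1 2 ∨
        (.inr x : B2Path) = B2Path.chord 4 5 ∨ (.inr x : B2Path) = B2Path.chord 5 6 := by
    decide
  rcases hloop x hx with h | h | h | h <;> rw [h]
  · simpa using hc.sum_eq (.r 2) (r := B2Path.chord 0 2) (A := {B2Path.chord 0 1}) (B := ∅)
      (by decide) (by decide)
  · simpa using (hc.sum_eq (.r 0) (r := B2Path.chord 0 2) (A := ∅) (B := {B2Path.chord 1 2})
      (by decide) (by decide)).symm
  · simpa using hc.sum_eq (.r 6) (r := B2Path.chord 4 6) (A := {B2Path.chord 4 5}) (B := ∅)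
      (by decide) (by decide)
  · simpa using (hc.sum_eq (.r 4) (r := B2Path.chord 4 6) (A := ∅) (B := {B2Path.chord 5 6})
      (by decide) (by decide)).symm

end IsCentralCoeffs

theorem exists_smul_one_eq_of_mem_center {z : B2} (hz : z ∈ Subalgebra.center (ZMod 2) B2) :
    ∃ a : ZMod 2, a • 1 = z := by
  obtain ⟨c, rfl⟩ := (Submodule.mem_span_range_iff_exists_fun (ZMod 2)).1
    (span_pathElem_eq_top ▸ Submodule.mem_top (x := z))
  have hc : IsCentralCoeffs c := by
    intro g
    have := congrArg pathRep (Subalgebra.mem_center_iff.1 hz (pathElem (genPath g)))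
    simp only [map_mul, map_sum, map_smul, pathRep_pathElem] at this
    exact this.symm
  refine ⟨c (.inl 0), ?_⟩
  simp only [Fintype.sum_sum_type, hc.inr_eq_zero, hc.inl_eq, zero_smul, Finset.sum_const_zero,
    add_zero, ← Finset.smul_sum]
  rw [one_eq_sum_idem2]
  rfl

/-- the center of B(Z_2) is one-dimensional over F_2,
spanned by 1 = i_0 + i_1 + i_2 + i_3. -/
theorem stmt_5 :
    Subalgebra.toSubmodule (Subalgebra.center (ZMod 2) B2) =
      Submodule.span (ZMod 2) {(1 : B2)} ∧
    Module.finrank (ZMod 2) (Subalgebra.center (ZMod 2) B2) = 1 ∧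
    (1 : B2) = ∑ k : Fin 4, idem2 k := by
  have hcenter : Subalgebra.toSubmodule (Subalgebra.center (ZMod 2) B2) =
      Submodule.span (ZMod 2) {(1 : B2)} := by
    refine le_antisymm
      (fun z hz => Submodule.mem_span_singleton.2 (exists_smul_one_eq_of_mem_center hz)) ?_
    rw [Submodule.span_le, Set.singleton_subset_iff]
    exact Subalgebra.one_mem _
  have : Nontrivial B2 := pathRep.toRingHom.domain_nontrivial
  refine ⟨hcenter, ?_, one_eq_sum_idem2⟩
  rw [← Subalgebra.finrank_toSubmodule, hcenter, finrank_span_singleton one_ne_zero]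
end

section
/- There is an F_2-algebra isomorphism B(Z_2) ≅ B(Z_2)^{op} sending ρ_k to ρ_{8−k} for k = 1,…,7 and the idempotents i_0, i_1, i_2, i_3 to i_3, i_2, i_1, i_0 respectively. -/
open FreeAlgebra

/-!
Reflecting the quiver (`i_k ↦ i_{3-k}`, `ρ_k ↦ ρ_{8-k}`) reverses every arrow, and it maps each
defining relation of `B(Z_2)`, read backwards, to a defining relation. So the reflection of the
generators extends from the free algebra to an anti-homomorphism `B(Z_2) → B(Z_2)ᵐᵒᵖ`, which is
its own inverse since the reflection of the generators is an involution.
-/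

open MulOpposite

section InvolutiveAntiHom

variable {R A : Type*} [CommSemiring R] [Semiring A] [Algebra R A]

noncomputable def AlgHom.opEquivOfInvolutive (f : A →ₐ[R] Aᵐᵒᵖ)
    (hf : ∀ x, (f (f x).unop).unop = x) : A ≃ₐ[R] Aᵐᵒᵖ :=
  AlgEquiv.ofBijective f
    ⟨Function.LeftInverse.injective (g := fun y : Aᵐᵒᵖ => (f y.unop).unop) hf,
      Function.RightInverse.surjective fun y => unop_injective (hf y.unop)⟩

@[simp]
theorem AlgHom.opEquivOfInvolutive_apply (f : A →ₐ[R] Aᵐᵒᵖ)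
    (hf : ∀ x, (f (f x).unop).unop = x) (x : A) : f.opEquivOfInvolutive hf x = f x :=
  rfl

end InvolutiveAntiHom

theorem idem2_mul_self (k : Fin 4) : idem2 k * idem2 k = idem2 k := by
  simpa [idem2] using RingQuot.mkAlgHom_rel _ (Rel2.idem k)

theorem idem2_mul_of_ne {k l : Fin 4} (h : k ≠ l) : idem2 k * idem2 l = 0 := by
  simpa [idem2] using RingQuot.mkAlgHom_rel _ (Rel2.orth k l h)

theorem sum_idem2 : ∑ k : Fin 4, idem2 k = 1 := by
  simpa [idem2, map_sum] using RingQuot.mkAlgHom_rel _ Rel2.sum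

theorem idem2_src_mul_arr2 (m : Fin 7) : idem2 (src2 m) * arr2 m = arr2 m := by
  simpa [idem2, arr2] using RingQuot.mkAlgHom_rel _ (Rel2.source m)

theorem arr2_mul_idem2_tgt (m : Fin 7) : arr2 m * idem2 (tgt2 m) = arr2 m := by
  simpa [idem2, arr2] using RingQuot.mkAlgHom_rel _ (Rel2.target m)

def zeroPairs2 : Finset (Fin 7 × Fin 7) := {(0, 3), (3, 6), (1, 0), (2, 1), (5, 4), (6, 5)}

theorem arr2_mul_arr2_eq_zero {m n : Fin 7} (h : (m, n) ∈ zeroPairs2) : arr2 m * arr2 n = 0 := by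
  have hrel : Rel2 (ι (ZMod 2) (Gen2.r m) * ι (ZMod 2) (Gen2.r n)) 0 := by
    simp only [zeroPairs2, Finset.mem_insert, Finset.mem_singleton, Prod.mk.injEq] at h
    rcases h with ⟨rfl, rfl⟩ | ⟨rfl, rfl⟩ | ⟨rfl, rfl⟩ | ⟨rfl, rfl⟩ | ⟨rfl, rfl⟩ | ⟨rfl, rfl⟩
    exacts [Rel2.rel14, Rel2.rel47, Rel2.rel21, Rel2.rel32, Rel2.rel65, Rel2.rel76]
  simpa [arr2] using RingQuot.mkAlgHom_rel _ hrel

/-- With the 0-based indexing of `arr2`, `ρ_k ↦ ρ_{8-k}` reads `m ↦ 6 - m`. -/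
noncomputable def reflectGen2 : Gen2 → B2
  | Gen2.e k => idem2 (3 - k)
  | Gen2.r m => arr2 (6 - m)

noncomputable def reflectFree2 : FreeAlgebra (ZMod 2) Gen2 →ₐ[ZMod 2] B2ᵐᵒᵖ :=
  lift (ZMod 2) (op ∘ reflectGen2)

@[simp]
theorem reflectFree2_ι (a : Gen2) : reflectFree2 (ι (ZMod 2) a) = op (reflectGen2 a) :=
  lift_ι_apply _ _

theorem reflectFree2_ι_mul_ι (a b : Gen2) :
    reflectFree2 (ι (ZMod 2) a * ι (ZMod 2) b) = op (reflectGen2 b * reflectGen2 a) := by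
  simp

theorem tgt2_reflect : ∀ m : Fin 7, tgt2 (6 - m) = 3 - src2 m := by decide

theorem src2_reflect : ∀ m : Fin 7, src2 (6 - m) = 3 - tgt2 m := by decide

theorem reflectFree2_rel ⦃a b : FreeAlgebra (ZMod 2) Gen2⦄ (h : Rel2 a b) :
    reflectFree2 a = reflectFree2 b := by
  induction h with
  | idem k => simp only [reflectFree2_ι_mul_ι, reflectGen2, idem2_mul_self, reflectFree2_ι]
  | orth k l h =>
    rw [reflectFree2_ι_mul_ι, reflectGen2, reflectGen2, idem2_mul_of_ne, op_zero, map_zero]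
    revert k l h; decide
  | sum =>
    have hsum : ∑ k : Fin 4, idem2 (3 - k) = 1 := by
      rw [← sum_idem2]
      exact Fintype.sum_equiv (Equiv.subLeft 3) _ _ fun _ => rfl
    simp [reflectGen2, ← Finset.op_sum, hsum]
  | source m =>
    simp only [reflectFree2_ι_mul_ι, reflectFree2_ι, reflectGen2, ← tgt2_reflect,
      arr2_mul_idem2_tgt]
  | target m =>
    simp only [reflectFree2_ι_mul_ι, reflectFree2_ι, reflectGen2, ← src2_reflect,
      idem2_src_mul_arr2]
  | rel14 | rel47 | rel21 | rel32 | rel65 | rel76 =>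
    rw [reflectFree2_ι_mul_ι, map_zero, reflectGen2, reflectGen2,
      arr2_mul_arr2_eq_zero (by decide), op_zero]

noncomputable def reflect2 : B2 →ₐ[ZMod 2] B2ᵐᵒᵖ :=
  RingQuot.liftAlgHom (ZMod 2) ⟨reflectFree2, reflectFree2_rel⟩

@[simp]
theorem reflect2_idem2 (k : Fin 4) : reflect2 (idem2 k) = op (idem2 (3 - k)) := by
  simp [reflect2, idem2, reflectGen2]

@[simp]
theorem reflect2_arr2 (m : Fin 7) : reflect2 (arr2 m) = op (arr2 (6 - m)) := by
  simp [reflect2, arr2, reflectGen2]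

theorem reflect2_involutive (x : B2) : (reflect2 (reflect2 x).unop).unop = x := by
  suffices h : (AlgEquiv.opOp (ZMod 2) B2).symm.toAlgHom.comp (reflect2.op.comp reflect2) =
      AlgHom.id (ZMod 2) B2 from AlgHom.congr_fun h x
  ext (k | m)
  · show (reflect2 (reflect2 (idem2 k)).unop).unop = idem2 k
    simp
  · show (reflect2 (reflect2 (arr2 m)).unop).unop = arr2 m
    simp

theorem ρ2_eq_arr2 {k : ℕ} (h1 : 1 ≤ k) (h7 : k ≤ 7) : ρ2 k = arr2 ⟨k - 1, by omega⟩ :=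
  dif_pos ⟨h1, h7⟩

/-- there is an F_2-algebra isomorphism B(Z_2) ≅ B(Z_2)^op sending
rho_k to rho_{8-k} and i_k to i_{3-k}. -/
theorem stmt_7 :
    ∃ φ : B2 ≃ₐ[ZMod 2] B2ᵐᵒᵖ,
      (∀ k : ℕ, 1 ≤ k → k ≤ 7 → φ (ρ2 k) = MulOpposite.op (ρ2 (8 - k))) ∧
      (∀ k : Fin 4, φ (idem2 k) = MulOpposite.op (idem2 (3 - k))) := by
  refine ⟨reflect2.opEquivOfInvolutive reflect2_involutive, fun k h1 h7 => ?_, fun k => ?_⟩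
  · rw [ρ2_eq_arr2 h1 h7, ρ2_eq_arr2 (by omega) (by omega), AlgHom.opEquivOfInvolutive_apply,
      reflect2_arr2]
    congr 2
    ext
    simp only [Fin.sub_def, Fin.coe_ofNat_eq_mod, Nat.mod_succ]
    omega
  · exact reflect2_idem2 k
end
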